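/- arXiv:2303.05355 — 5 statements merged into one kernel-verified Lean document; each statement's English description precedes it below -/
import Mathlib

section
/- Any functional T : (ℕ → ℕ) → (ℕ → ℕ) → (ℕ → ℕ) which translates characteristic functions of ranges into bounding functions (i.e., whenever g is the characteristic function of the range of f, T f g is a bounding function for the range of f) fails to be continuous at some point, where (ℕ → ℕ) × (ℕ → ℕ) carries the product of Baire space topologies. -/
/-! Take `p = (0, χ)` with `χ` the characteristic function of `{0, 1}`. The step functions
`stepFun j`, equal to `0` up to `j` and to `1` afterwards, all have range `{0, 1}` and converge
to `0` in Baire space, yet any bound for the range of `stepFun j` must be at least `j + 1` at `1`,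
since `1` is first attained at `j + 1`. So `T (stepFun j) χ 1` is unbounded along a sequence
converging to `p`, while continuity into the discrete `ℕ` would make it eventually constant. -/

open Filter Topology

namespace RangeBoundFunctional

def IsRangeCharacteristic (f g : ℕ → ℕ) : Prop :=
  ∀ n, (∃ m, f m = n) ↔ g n > 0

def IsRangeBound (f h : ℕ → ℕ) : Prop :=
  ∀ n, (∃ m, f m = n) ↔ ∃ t ≤ h n, f t = n

theorem IsRangeBound.le_of_forall_lt_ne {f h : ℕ → ℕ} (hb : IsRangeBound f h) {n t : ℕ}
    (ht : f t = n) (hfirst : ∀ s < t, f s ≠ n) : t ≤ h n := by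
  obtain ⟨s, hs, hfs⟩ := (hb n).mp ⟨t, ht⟩
  by_contra! hlt
  exact hfirst s (hs.trans_lt hlt) hfs

def stepFun (j m : ℕ) : ℕ := if m ≤ j then 0 else 1

def charZeroOne (n : ℕ) : ℕ := if n ≤ 1 then 1 else 0

theorem isRangeCharacteristic_stepFun (j : ℕ) :
    IsRangeCharacteristic (stepFun j) charZeroOne := by
  intro n
  constructor
  · rintro ⟨m, rfl⟩
    unfold stepFun charZeroOne
    split_ifs <;> simp_all
  · intro hn
    have hn1 : n ≤ 1 := by
      by_contra h
      simp [charZeroOne, h] at hn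
    interval_cases n
    · exact ⟨0, by simp [stepFun]⟩
    · exact ⟨j + 1, by simp [stepFun]⟩

theorem lt_of_isRangeBound_stepFun {j : ℕ} {h : ℕ → ℕ} (hb : IsRangeBound (stepFun j) h) :
    j < h 1 :=
  hb.le_of_forall_lt_ne (t := j + 1) (by simp [stepFun])
    (fun s hs => by simp [stepFun, Nat.le_of_lt_succ hs])

theorem tendsto_stepFun_atTop : Tendsto stepFun atTop (𝓝 0) := by
  rw [tendsto_pi_nhds]
  intro m
  refine tendsto_const_nhds.congr' ?_
  filter_upwards [eventually_ge_atTop m] with j hj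
  simp [stepFun, hj]

end RangeBoundFunctional

open RangeBoundFunctional in
theorem stmt_8 (T : (ℕ → ℕ) → (ℕ → ℕ) → (ℕ → ℕ))
    (hT : ∀ f g : ℕ → ℕ,
      (∀ n : ℕ, (∃ m, f m = n) ↔ g n > 0) →
      (∀ n : ℕ, (∃ m, f m = n) ↔ ∃ t ≤ T f g n, f t = n)) :
    ∃ p : (ℕ → ℕ) × (ℕ → ℕ), ¬ ContinuousAt (fun q : (ℕ → ℕ) × (ℕ → ℕ) => T q.1 q.2) p := by
  refine ⟨(0, charZeroOne), fun hcont => ?_⟩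
  have hseq : Tendsto (fun j => (stepFun j, charZeroOne)) atTop (𝓝 (0, charZeroOne)) :=
    tendsto_stepFun_atTop.prodMk_nhds tendsto_const_nhds
  have hconv : Tendsto (fun j => T (stepFun j) charZeroOne 1) atTop
      (𝓝 (T 0 charZeroOne 1)) :=
    ((continuous_apply 1).continuousAt.tendsto.comp hcont.tendsto).comp hseq
  have hunbounded : Tendsto (fun j => T (stepFun j) charZeroOne 1) atTop atTop :=
    tendsto_atTop_mono
      (fun j => lt_of_isRangeBound_stepFun (hT _ _ (isRangeCharacteristic_stepFun j)))
      (tendsto_add_atTop_nat 1)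
  exact hconv.not_tendsto (disjoint_nhds_atTop _) hunbounded
end

section
/- If R : (ℕ → ℕ) → ℕ is a realizer for LPO (R(f) = 0 ↔ ∃ n, f(n) = 0), then there exist continuous maps φ : (ℕ → ℕ) → (ℕ → ℕ) and ψ : ℕ → ℕ such that ψ ∘ R ∘ φ is a realizer for LLPOmin, i.e., for all f and n with f(n) = 0, ψ(R(φ(f))) is congruent mod 2 to the least t with f(t) = 0. -/
/-!
Take `φ f n = 0` exactly when a zero of `f` occurs among `f 0, …, f n` and the first one sits at an
even index. Each coordinate of `φ f` depends on finitely many values of `f`, so `φ` is continuous,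
and `φ f` has a zero iff the least zero of `f` is even, which `R` decides; `ψ` turns `R`'s answer
into the parity bit.
-/

open Filter Topology

theorem DependsOn.continuous_of_finite {ι : Type*} {X : ι → Type*} {Y : Type*}
    [∀ i, TopologicalSpace (X i)] [∀ i, DiscreteTopology (X i)] [TopologicalSpace Y]
    {f : (Π i, X i) → Y} {s : Set ι} (hf : DependsOn f s) (hs : s.Finite) : Continuous f := by
  refine ((IsLocallyConstant.iff_eventually_eq f).2 fun x => ?_).continuous
  have hnear : ∀ᶠ y in 𝓝 x, ∀ i ∈ s, y i = x i :=
    (eventually_all_finite hs).2 fun i _ =>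
      (continuous_apply i).continuousAt.eventually_mem ((isOpen_discrete {x i}).mem_nhds rfl)
  exact hnear.mono fun y hy => hf hy

open Classical in
noncomputable def evenFirstZeroFlag (f : ℕ → ℕ) (n : ℕ) : ℕ :=
  if ∃ t ≤ n, f t = 0 ∧ (∀ s < t, f s ≠ 0) ∧ Even t then 0 else 1

theorem dependsOn_evenFirstZeroFlag (n : ℕ) :
    DependsOn (fun f => evenFirstZeroFlag f n) (Set.Iic n) := by
  intro f g hfg
  have hlt : ∀ t ≤ n, ∀ s < t, f s = g s := fun t ht s hs => hfg s (Set.mem_Iic.2 (by omega))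
  simp only [evenFirstZeroFlag]
  congr 1
  refine propext (exists_congr fun t => and_congr_right fun ht => ?_)
  rw [hfg t ht]
  exact and_congr_right fun _ => and_congr_left fun _ =>
    forall₂_congr fun s hs => by rw [hlt t ht s hs]

theorem continuous_evenFirstZeroFlag : Continuous evenFirstZeroFlag :=
  continuous_pi fun n => (dependsOn_evenFirstZeroFlag n).continuous_of_finite (Set.finite_Iic n)

theorem exists_evenFirstZeroFlag_eq_zero_iff {f : ℕ → ℕ} (hf : ∃ n, f n = 0) :
    (∃ n, evenFirstZeroFlag f n = 0) ↔ Even (sInf {t | f t = 0}) := by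
  simp only [evenFirstZeroFlag, ite_eq_left_iff, one_ne_zero, imp_false, not_not]
  constructor
  · rintro ⟨n, t, -, ht, hlt, heven⟩
    rwa [IsLeast.csInf_eq (s := {s | f s = 0}) ⟨ht, fun s hs => not_lt.1 fun h => hlt s h hs⟩]
  · intro heven
    exact ⟨_, _, le_rfl, Nat.sInf_mem hf,
      fun s hs => Nat.notMem_of_lt_sInf (s := {t | f t = 0}) hs, heven⟩

theorem stmt_10 (R : (ℕ → ℕ) → ℕ) (hR : ∀ f : ℕ → ℕ, R f = 0 ↔ ∃ n, f n = 0) :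
    ∃ (φ : (ℕ → ℕ) → (ℕ → ℕ)) (ψ : ℕ → ℕ),
      Continuous φ ∧ Continuous ψ ∧
      ∀ (f : ℕ → ℕ) (n : ℕ), f n = 0 →
        ψ (R (φ f)) % 2 = sInf {t : ℕ | f t = 0} % 2 := by
  refine ⟨evenFirstZeroFlag, fun k => if k = 0 then 0 else 1, continuous_evenFirstZeroFlag,
    continuous_of_discreteTopology, fun f n hn => ?_⟩
  have hparity := (hR _).trans (exists_evenFirstZeroFlag_eq_zero_iff ⟨n, hn⟩)
  dsimp only
  by_cases heven : Even (sInf {t | f t = 0})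
  · rw [if_pos (hparity.2 heven), Nat.even_iff.1 heven]
  · rw [if_neg (mt hparity.1 heven), Nat.odd_iff.1 (Nat.not_even_iff_odd.1 heven)]
end

section
/- If S : (ℕ → ℕ) → ℕ is a realizer for LLPOmin, then there exist continuous pre- and post-processing functions h : ℕ → ℕ and w : ℕ → ℕ such that the composite g ↦ w(S(h ∘ g)) is a realizer for LLPO: for every g : ℕ → ℕ, if all values of g at even positions are 0 or all values at odd positions are 0, then g(2n + w(S(h ∘ g))) = 0 for all n, and w(S(h ∘ g)) ∈ {0,1}. -/
/-!
Pre-process `g` by `h`, which sends `0 ↦ 1` and everything else to `0`: the zeros of `h ∘ g`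
are exactly the positions where `g` is nonzero. If `g` vanishes at all positions of parity `b`,
the first nonzero position of `g` has parity `1 - b`, and the LLPOmin realizer reports that
parity; post-processing by `w n = 1 - n % 2` turns it back into `b`. If `g` is identically zero,
every answer is correct.
-/

def zeroIndicator (n : ℕ) : ℕ := if n = 0 then 1 else 0

def oppositeParity (n : ℕ) : ℕ := 1 - n % 2

theorem zeroIndicator_comp_eq_zero_iff (g : ℕ → ℕ) (t : ℕ) :
    (zeroIndicator ∘ g) t = 0 ↔ g t ≠ 0 := by
  simp [zeroIndicator]

theorem oppositeParity_le_one (n : ℕ) : oppositeParity n ≤ 1 :=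
  Nat.sub_le _ _

theorem mod_two_ne_of_vanishes_at_parity {g : ℕ → ℕ} {b t : ℕ}
    (hg : ∀ n, g (2 * n + b) = 0) (ht : g t ≠ 0) : t % 2 ≠ b := by
  intro htb
  apply ht
  rw [← Nat.div_add_mod t 2, htb]
  exact hg _

theorem oppositeParity_realizer_eq {S : (ℕ → ℕ) → ℕ}
    (hS : ∀ (f : ℕ → ℕ) (n : ℕ), f n = 0 → S f % 2 = sInf {t : ℕ | f t = 0} % 2)
    {g : ℕ → ℕ} {b m : ℕ} (hb : b ≤ 1) (hg : ∀ n, g (2 * n + b) = 0) (hm : g m ≠ 0) :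
    oppositeParity (S (zeroIndicator ∘ g)) = b := by
  have hzero : (zeroIndicator ∘ g) m = 0 := (zeroIndicator_comp_eq_zero_iff g m).2 hm
  have hfirst : (zeroIndicator ∘ g) (sInf {t | (zeroIndicator ∘ g) t = 0}) = 0 :=
    Nat.sInf_mem (s := {t | (zeroIndicator ∘ g) t = 0}) ⟨m, hzero⟩
  have hparity :=
    mod_two_ne_of_vanishes_at_parity hg ((zeroIndicator_comp_eq_zero_iff g _).1 hfirst)
  have hreport := hS _ m hzero
  unfold oppositeParity
  omega

theorem stmt_11 (S : (ℕ → ℕ) → ℕ)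
    (hS : ∀ (f : ℕ → ℕ) (n : ℕ), f n = 0 → S f % 2 = sInf {t : ℕ | f t = 0} % 2) :
    ∃ h w : ℕ → ℕ, Continuous h ∧ Continuous w ∧
      ∀ g : ℕ → ℕ,
        w (S (h ∘ g)) ≤ 1 ∧
        (((∀ n, g (2 * n) = 0) ∨ (∀ n, g (2 * n + 1) = 0)) →
          ∀ n, g (2 * n + w (S (h ∘ g))) = 0) := by
  refine ⟨zeroIndicator, oppositeParity, continuous_of_discreteTopology,
    continuous_of_discreteTopology, fun g => ⟨oppositeParity_le_one _, fun hg => ?_⟩⟩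
  obtain ⟨b, hb, hgb⟩ : ∃ b ≤ 1, ∀ n, g (2 * n + b) = 0 := by
    rcases hg with hg | hg
    exacts [⟨0, zero_le_one, hg⟩, ⟨1, le_rfl, hg⟩]
  by_cases hnonzero : ∃ m, g m ≠ 0
  · obtain ⟨m, hm⟩ := hnonzero
    rw [oppositeParity_realizer_eq hS hb hgb hm]
    exact hgb
  · push Not at hnonzero
    exact fun n => hnonzero _
end

section
/- Any bijection H : [0,1] → [0,1] satisfying Banach's condition for f(x) = g(x) = x/2 (i.e., for every x, H(x) = x/2 or H(x) = 2x) satisfies H(1/2) = 1 but H(1/2 + 2^{-n}) = 1/4 + 2^{-(n+1)} for all n ≥ 1; hence H is not continuous at 1/2. -/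
/-!
Banach's condition forces `H x = x / 2` whenever `2 x > 1`, since `2 x` is then outside `[0, 1]`.
So `H` maps `(1/2, 1]` into `[0, 1/2]`, and the preimage of `1`, which exists by surjectivity,
can only be `1/2`. Hence `H` jumps at `1/2`: its value there is `1`, while just to the right of
`1/2` it is close to `1/4`.
-/

open Set

/-- Banach's condition for `f = g = (· / 2)`. -/
def IsHalvingBanach (H : Icc (0 : ℝ) 1 → Icc (0 : ℝ) 1) : Prop :=
  ∀ x, (H x : ℝ) = (x : ℝ) / 2 ∨ (x : ℝ) = (H x : ℝ) / 2

namespace IsHalvingBanach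

variable {H : Icc (0 : ℝ) 1 → Icc (0 : ℝ) 1}

theorem apply_eq_half_of_half_lt (hH : IsHalvingBanach H) {x : Icc (0 : ℝ) 1}
    (hx : 1 / 2 < (x : ℝ)) : (H x : ℝ) = x / 2 :=
  (hH x).resolve_right fun h => by linarith [(H x).2.2]

theorem apply_half_eq_one (hH : IsHalvingBanach H) (hsurj : Function.Surjective H)
    (h12 : (1 / 2 : ℝ) ∈ Icc (0 : ℝ) 1) : (H ⟨1 / 2, h12⟩ : ℝ) = 1 := by
  obtain ⟨x, hx⟩ := hsurj ⟨1, by norm_num⟩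
  have hHx : (H x : ℝ) = 1 := by rw [hx]
  have hx_half : x = ⟨1 / 2, h12⟩ := by
    rcases hH x with h | h
    · linarith [x.2.2]
    · exact Subtype.ext (by rw [h, hHx])
  rw [← hx_half, hHx]

theorem not_continuousAt_half (hH : IsHalvingBanach H) (h12 : (1 / 2 : ℝ) ∈ Icc (0 : ℝ) 1)
    (h_half : (H ⟨1 / 2, h12⟩ : ℝ) = 1) : ¬ ContinuousAt H ⟨1 / 2, h12⟩ := by
  intro hcont
  obtain ⟨δ, hδ, hball⟩ := Metric.continuousAt_iff.mp hcont (1 / 2) (by norm_num)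
  set t := min (δ / 2) (1 / 2)
  have ht_pos : 0 < t := lt_min (by linarith) (by norm_num)
  have ht_le : t ≤ 1 / 2 := min_le_right _ _
  let x : Icc (0 : ℝ) 1 := ⟨1 / 2 + t, by constructor <;> linarith⟩
  have hdist : dist x ⟨1 / 2, h12⟩ < δ := by
    rw [Subtype.dist_eq, Real.dist_eq, show (1 / 2 + t - 1 / 2 : ℝ) = t by ring,
      abs_of_pos ht_pos]
    linarith [min_le_left (δ / 2) (1 / 2)]
  have hHx : (H x : ℝ) = (1 / 2 + t) / 2 := hH.apply_eq_half_of_half_lt (by simp [x, ht_pos])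
  have := hball hdist
  rw [Subtype.dist_eq, Real.dist_eq, hHx, h_half, abs_lt] at this
  linarith [this.1]

end IsHalvingBanach

theorem stmt_14 (H : Set.Icc (0 : ℝ) 1 → Set.Icc (0 : ℝ) 1)
    (hbij : Function.Bijective H)
    (hBanach : ∀ x : Set.Icc (0 : ℝ) 1, (H x : ℝ) = (x : ℝ) / 2 ∨ (x : ℝ) = (H x : ℝ) / 2)
    (h12 : (1 / 2 : ℝ) ∈ Set.Icc (0 : ℝ) 1) :
    (H ⟨1 / 2, h12⟩ : ℝ) = 1 ∧
    (∀ n : ℕ, 1 ≤ n → ∀ hx : (1 / 2 + (2 : ℝ) ^ (-(n : ℤ))) ∈ Set.Icc (0 : ℝ) 1,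
      (H ⟨1 / 2 + (2 : ℝ) ^ (-(n : ℤ)), hx⟩ : ℝ) = 1 / 4 + (2 : ℝ) ^ (-((n : ℤ) + 1))) ∧
    ¬ ContinuousAt H ⟨1 / 2, h12⟩ := by
  have hH : IsHalvingBanach H := hBanach
  have h_half := hH.apply_half_eq_one hbij.surjective h12
  refine ⟨h_half, fun n _ hx => ?_, hH.not_continuousAt_half h12 h_half⟩
  have hpow : (2 : ℝ) ^ (-((n : ℤ) + 1)) = (2 : ℝ) ^ (-(n : ℤ)) / 2 := by
    rw [neg_add, zpow_add₀ two_ne_zero, zpow_neg_one, div_eq_mul_inv]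
  rw [hH.apply_eq_half_of_half_lt (by simp), hpow]
  ring
end

section
/- Any bijection H : (ℕ → Bool) → (ℕ → Bool) satisfying Banach's condition for f = g = P, where P is the padding map (P(x)(2m) = x(m), P(x)(odd) = false), is not sequentially continuous at the sequence 1,0,1,0,1,0,…: letting σₙ be n copies of '10' followed by '11' followed by zeros, σₙ → (10)^∞ but H(σₙ) → (1000)^∞ while H((10)^∞) is the all-ones sequence. -/
/-! A point with a `true` odd coordinate is not in the image of the padding map `P`, so Banach's
condition forces `H x = P x` at such points. This applies to every `σₙ` (at coordinate `2n+1`), so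
`H (σₙ) 1 = P (σₙ) 1 = false`. On the other hand `(10)^∞ = P 1^∞`, and the `H`-preimage of `1^∞`
can only satisfy the second alternative of Banach's condition, whence `H ((10)^∞) = 1^∞`, which is
`true` at coordinate `1`. -/

section Padding

variable {P : (ℕ → Bool) → ℕ → Bool}

lemma pad_apply_odd (hP : ∀ (x : ℕ → Bool) (n : ℕ), P x n = if n % 2 = 0 then x (n / 2) else false)
    (x : ℕ → Bool) (m : ℕ) : P x (2 * m + 1) = false := by
  simp [hP]

lemma banach_eq_pad_of_odd_true
    (hP : ∀ (x : ℕ → Bool) (n : ℕ), P x n = if n % 2 = 0 then x (n / 2) else false)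
    {H : (ℕ → Bool) → ℕ → Bool} (hBanach : ∀ x, H x = P x ∨ P (H x) = x)
    {x : ℕ → Bool} {m : ℕ} (hx : x (2 * m + 1) = true) : H x = P x := by
  refine (hBanach x).resolve_right fun h => ?_
  simpa [pad_apply_odd hP, hx] using congrFun h (2 * m + 1)

lemma banach_apply_pad_of_odd_true
    (hP : ∀ (x : ℕ → Bool) (n : ℕ), P x n = if n % 2 = 0 then x (n / 2) else false)
    {H : (ℕ → Bool) → ℕ → Bool} (hsurj : Function.Surjective H)
    (hBanach : ∀ x, H x = P x ∨ P (H x) = x)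
    {y : ℕ → Bool} {m : ℕ} (hy : y (2 * m + 1) = true) : H (P y) = y := by
  obtain ⟨z, rfl⟩ := hsurj y
  have hPz : P (H z) = z := (hBanach z).resolve_left fun h => by
    simp [h, pad_apply_odd hP] at hy
  rw [hPz]

end Padding

theorem stmt_16 (P : (ℕ → Bool) → (ℕ → Bool))
    (hP : ∀ (x : ℕ → Bool) (n : ℕ), P x n = if n % 2 = 0 then x (n / 2) else false)
    (H : (ℕ → Bool) → (ℕ → Bool)) (hbij : Function.Bijective H)
    (hBanach : ∀ x : ℕ → Bool, H x = P x ∨ P (H x) = x)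
    (σ : ℕ → (ℕ → Bool))
    (hσ : ∀ n k : ℕ, σ n k =
      if k < 2 * n then decide (k % 2 = 0) else if k ≤ 2 * n + 1 then true else false)
    (a : ℕ → Bool) (ha : ∀ k, a k = decide (k % 2 = 0)) :
    Filter.Tendsto σ Filter.atTop (nhds a) ∧
    ¬ Filter.Tendsto (fun n => H (σ n)) Filter.atTop (nhds (H a)) := by
  have ha_pad : a = P fun _ => true := by
    funext k
    rw [ha, hP]
    split_ifs <;> simp_all
  have hHa : H a 1 = true := by
    rw [ha_pad, banach_apply_pad_of_odd_true hP hbij.2 hBanach (m := 0) rfl]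
  have hHσ (n : ℕ) : H (σ n) 1 = false := by
    rw [banach_eq_pad_of_odd_true hP hBanach (m := n) (by simp [hσ]), pad_apply_odd hP _ 0]
  refine ⟨tendsto_pi_nhds.2 fun k => tendsto_const_nhds.congr' ?_, fun h => ?_⟩
  · filter_upwards [Filter.eventually_gt_atTop k] with n hn
    rw [hσ, ha, if_pos (by omega)]
  · have h1 := tendsto_pi_nhds.1 h 1
    rw [nhds_discrete, Filter.tendsto_pure, hHa] at h1
    simpa [hHσ] using h1.exists
end
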